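/- (Lemma 7.) For every complex number q with |q| < 1 and all integers m₁ ≥ 1 and m₂ ≥ 1, ∑_{k₂=1}^{∞} ∑_{k₁=1}^{∞} q^{2k₁(m₁+m₂) + 2k₂ m₂ + (m₁+m₂)(m₁+m₂+1)} / ( ∏_{j=0}^{m₁} (1 + q^{2k₁+2j+1}) · ∏_{j=0}^{m₂} (1 + q^{2k₁+2k₂+2m₁+2j+1}) ) = q^{2(m₁+m₂)} · q^{2m₂} · q^{(m₁+m₂)(m₁+m₂+1)} / ( (1 - q^{2(m₁+m₂)}) · (1 - q^{2m₂}) · ∏_{j=1}^{m₁+m₂} (1 + q^{2j+1}) ). Here the numerator of the summand is q^{2k₁+2} q^{2k₁+4} ⋯ q^{2k₁+2m₁} · q^{2k₁+2k₂+2m₁+2} ⋯ q^{2k₁+2k₂+2m₁+2m₂}, and q^{(m₁+m₂)(m₁+m₂+1)} = q^2 q^4 ⋯ q^{2(m₁+m₂)}. -/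

import Mathlib

/-! With `P(t, m) = ∏_{j<m} (1 + q^{t+2j})`, the product `P(t, m+1)` factors both as
`P(t, m) (1 + q^{t+2m})` and as `(1 + q^t) P(t+2, m)`, so
`q^{2mk} / P(t+2k, m+1) = (H k - H (k+1)) / (1 - q^{2m})` with `H k = q^{2mk} / P(t+2k, m)`,
and the series over `k` telescopes to `1 / ((1 - q^{2m}) P(t, m))`. Summing over `k₂` first,
the result merges with the remaining product into a single `P` of length `m₁ + m₂ + 1`, and the
sum over `k₁` telescopes in the same way. Every factor `1 + q^e` has norm at least `1 - |q|`, so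
the double series is dominated by a product of geometric series and the two sums may be swapped. -/

open Finset Filter Topology

theorem hasSum_of_eq_sub_succ {G : Type*} [AddCommGroup G] [TopologicalSpace G]
    [IsTopologicalAddGroup G] [T2Space G] {f H : ℕ → G} (hf : Summable f)
    (h : ∀ n, f n = H n - H (n + 1)) (hH : Tendsto H atTop (𝓝 0)) : HasSum f (H 0) := by
  refine hf.hasSum_iff_tendsto_nat.2 ?_
  simp_rw [h, sum_range_sub']
  simpa using tendsto_const_nhds.sub hH

-- the q-Pochhammer symbol `(-q^s; q²)_n`
def negQPochhammer {R : Type*} [CommSemiring R] (q : R) (s n : ℕ) : R :=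
  ∏ j ∈ range n, (1 + q ^ (s + 2 * j))

section Algebra

variable {R : Type*} [CommSemiring R] (q : R)

theorem negQPochhammer_add (s a b : ℕ) :
    negQPochhammer q s (a + b) = negQPochhammer q s a * negQPochhammer q (s + 2 * a) b := by
  simp only [negQPochhammer, prod_range_add, mul_add, add_assoc]

theorem negQPochhammer_one (s : ℕ) : negQPochhammer q s 1 = 1 + q ^ s := by
  simp [negQPochhammer]

end Algebra

theorem one_div_negQPochhammer_sub {K : Type*} [Field K] (q : K) (t m : ℕ)
    (h : negQPochhammer q t (m + 1) ≠ 0) :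
    1 / negQPochhammer q t m - q ^ (2 * m) / negQPochhammer q (t + 2) m =
      (1 - q ^ (2 * m)) / negQPochhammer q t (m + 1) := by
  have hlast := negQPochhammer_add q t m 1
  have hfirst := negQPochhammer_add q t 1 m
  rw [negQPochhammer_one] at hlast hfirst
  rw [add_comm 1 m, mul_one] at hfirst
  have h₁ : negQPochhammer q t m ≠ 0 := left_ne_zero_of_mul (hlast ▸ h)
  have h₂ : negQPochhammer q (t + 2) m ≠ 0 := right_ne_zero_of_mul (hfirst ▸ h)
  rw [div_sub_div _ _ h₁ h₂, div_eq_div_iff (mul_ne_zero h₁ h₂) h]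
  linear_combination negQPochhammer q (t + 2) m * hlast -
    negQPochhammer q t m * q ^ (2 * m) * hfirst

section Norm

variable {𝕜 : Type*} [NormedField 𝕜] {q : 𝕜}

theorem one_sub_norm_le_norm_one_add_pow (hq : ‖q‖ ≤ 1) {e : ℕ} (he : e ≠ 0) :
    1 - ‖q‖ ≤ ‖1 + q ^ e‖ := by
  calc 1 - ‖q‖ ≤ 1 - ‖q‖ ^ e := by gcongr; exact pow_le_of_le_one (norm_nonneg q) hq he
    _ = ‖(1 : 𝕜)‖ - ‖-q ^ e‖ := by simp
    _ ≤ ‖1 + q ^ e‖ := by simpa using norm_sub_norm_le (1 : 𝕜) (-q ^ e)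

theorem one_sub_norm_pow_le_norm_negQPochhammer (hq : ‖q‖ ≤ 1) {s : ℕ} (hs : s ≠ 0) (n : ℕ) :
    (1 - ‖q‖) ^ n ≤ ‖negQPochhammer q s n‖ := by
  rw [negQPochhammer, norm_prod]
  calc (1 - ‖q‖) ^ n = ∏ _j ∈ range n, (1 - ‖q‖) := by simp
    _ ≤ _ := prod_le_prod (fun _ _ => by linarith) fun j _ =>
    one_sub_norm_le_norm_one_add_pow hq (by omega)

theorem negQPochhammer_ne_zero (hq : ‖q‖ < 1) {s : ℕ} (hs : s ≠ 0) (n : ℕ) :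
    negQPochhammer q s n ≠ 0 :=
  norm_pos_iff.1 <| (pow_pos (by linarith) n).trans_le
    (one_sub_norm_pow_le_norm_negQPochhammer hq.le hs n)

theorem norm_div_negQPochhammer_le (hq : ‖q‖ < 1) {s : ℕ} (hs : s ≠ 0) (x : 𝕜) (n : ℕ) :
    ‖x / negQPochhammer q s n‖ ≤ ‖x‖ / (1 - ‖q‖) ^ n := by
  rw [norm_div]
  exact div_le_div_of_nonneg_left (norm_nonneg x) (pow_pos (by linarith) n)
    (one_sub_norm_pow_le_norm_negQPochhammer hq.le hs n)

theorem norm_pow_mul_div_negQPochhammer_le (hq : ‖q‖ < 1) {t : ℕ} (ht : t ≠ 0) (a k n : ℕ) :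
    ‖q ^ (a * k) / negQPochhammer q t n‖ ≤ (‖q‖ ^ a) ^ k / (1 - ‖q‖) ^ n := by
  simpa [pow_mul] using norm_div_negQPochhammer_le hq ht (q ^ (a * k)) n

theorem summable_pow_norm_pow_div (hq : ‖q‖ < 1) {a : ℕ} (ha : a ≠ 0) (n : ℕ) :
    Summable fun k : ℕ => (‖q‖ ^ a) ^ k / (1 - ‖q‖) ^ n :=
  (summable_geometric_of_lt_one (by positivity) (pow_lt_one₀ (norm_nonneg q) hq ha)).div_const _

theorem one_sub_pow_ne_zero (hq : ‖q‖ < 1) {n : ℕ} (hn : n ≠ 0) : 1 - q ^ n ≠ 0 := by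
  refine sub_ne_zero.2 fun h => ?_
  have := pow_lt_one₀ (norm_nonneg q) hq hn
  rw [← norm_pow, ← h, norm_one] at this
  exact lt_irrefl _ this

end Norm

section Summation

variable {𝕜 : Type*} [NormedField 𝕜] [CompleteSpace 𝕜] {q : 𝕜}

theorem hasSum_pow_div_negQPochhammer (hq : ‖q‖ < 1) {m s : ℕ} (hm : m ≠ 0) (hs : s ≠ 0) :
    HasSum (fun k : ℕ => q ^ (2 * m * k) / negQPochhammer q (s + 2 * k) (m + 1))
      (1 / ((1 - q ^ (2 * m)) * negQPochhammer q s m)) := by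
  have hr : ‖q‖ ^ (2 * m) < 1 := pow_lt_one₀ (norm_nonneg q) hq (by omega)
  have hgeom := tendsto_pow_atTop_nhds_zero_of_lt_one (by positivity) hr
  set H : ℕ → 𝕜 := fun k =>
    (1 - q ^ (2 * m))⁻¹ * (q ^ (2 * m * k) / negQPochhammer q (s + 2 * k) m)
  have hsum : Summable fun k : ℕ => q ^ (2 * m * k) / negQPochhammer q (s + 2 * k) (m + 1) :=
    .of_norm_bounded (summable_pow_norm_pow_div hq (by omega) _)
      fun k => norm_pow_mul_div_negQPochhammer_le hq (by omega) _ k _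
  have htel : ∀ k, q ^ (2 * m * k) / negQPochhammer q (s + 2 * k) (m + 1) = H k - H (k + 1) := by
    intro k
    have := one_div_negQPochhammer_sub q (s + 2 * k) m (negQPochhammer_ne_zero hq (by omega) _)
    simp only [H, ← mul_sub, mul_add, pow_add, ← add_assoc, mul_div_assoc, mul_one]
    rw [eq_inv_mul_iff_mul_eq₀ (one_sub_pow_ne_zero hq (by omega))]
    linear_combination (-q ^ (2 * m * k)) * this
  have hH : Tendsto H atTop (𝓝 0) := by
    have := squeeze_zero_norm (fun k =>
      norm_pow_mul_div_negQPochhammer_le (t := s + 2 * k) hq (by omega) (2 * m) k m)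
      (by simpa using hgeom.div_const ((1 - ‖q‖) ^ m))
    simpa using this.const_mul (1 - q ^ (2 * m))⁻¹
  simpa [H, div_eq_mul_inv, mul_comm] using hasSum_of_eq_sub_succ hsum htel hH

theorem tsum_tsum_pow_mul_pow_div_negQPochhammer_mul (hq : ‖q‖ < 1) {m₁ m₂ s : ℕ}
    (hm₂ : m₂ ≠ 0) (hs : s ≠ 0) :
    ∑' k₂ : ℕ, ∑' k₁ : ℕ, q ^ (2 * (m₁ + m₂) * k₁) * q ^ (2 * m₂ * k₂) /
        (negQPochhammer q (s + 2 * k₁) (m₁ + 1) *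
          negQPochhammer q (s + 2 * k₁ + 2 * m₁ + 2 + 2 * k₂) (m₂ + 1)) =
      1 / ((1 - q ^ (2 * (m₁ + m₂))) * (1 - q ^ (2 * m₂)) * negQPochhammer q s (m₁ + m₂)) := by
  set F : ℕ → ℕ → 𝕜 := fun k₁ k₂ => q ^ (2 * (m₁ + m₂) * k₁) * q ^ (2 * m₂ * k₂) /
    (negQPochhammer q (s + 2 * k₁) (m₁ + 1) *
      negQPochhammer q (s + 2 * k₁ + 2 * m₁ + 2 + 2 * k₂) (m₂ + 1))
  have hsum : Summable (Function.uncurry F) := by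
    have hbound_nonneg : ∀ a n k : ℕ, 0 ≤ (‖q‖ ^ a) ^ k / (1 - ‖q‖) ^ n := fun a n k =>
      div_nonneg (by positivity) (pow_nonneg (by linarith) n)
    refine .of_norm_bounded
      ((summable_pow_norm_pow_div hq (a := 2 * (m₁ + m₂)) (by omega) (m₁ + 1)).mul_of_nonneg
        (summable_pow_norm_pow_div hq (a := 2 * m₂) (by omega) (m₂ + 1))
        (hbound_nonneg _ _) (hbound_nonneg _ _)) fun ⟨k₁, k₂⟩ => ?_
    simp only [Function.uncurry_apply_pair, F, mul_div_mul_comm, norm_mul]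
    exact mul_le_mul (norm_pow_mul_div_negQPochhammer_le hq (by omega) _ k₁ _)
      (norm_pow_mul_div_negQPochhammer_le hq (by omega) _ k₂ _) (norm_nonneg _)
      (hbound_nonneg _ _ _)
  have hinner : ∀ k₁ : ℕ, HasSum (F k₁) ((1 - q ^ (2 * m₂))⁻¹ *
      (q ^ (2 * (m₁ + m₂) * k₁) / negQPochhammer q (s + 2 * k₁) (m₁ + m₂ + 1))) := by
    intro k₁
    have hmerge := negQPochhammer_add q (s + 2 * k₁) (m₁ + 1) m₂
    rw [add_right_comm, mul_add_one, ← add_assoc] at hmerge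
    simp_rw [F, mul_div_mul_comm]
    rw [hmerge, show ∀ c x a b : 𝕜, c⁻¹ * (x / (a * b)) = x / a * (1 / (c * b)) by intros; ring]
    exact (hasSum_pow_div_negQPochhammer hq hm₂ (by omega)).mul_left _
  rw [hsum.tsum_comm, tsum_congr fun k₁ => (hinner k₁).tsum_eq, tsum_mul_left,
    (hasSum_pow_div_negQPochhammer hq (by omega) hs).tsum_eq]
  simp only [one_div, mul_inv]
  ring

end Summation

theorem lemma7_general (q : ℂ) (hq : ‖q‖ < 1) (m₁ m₂ : ℕ) (hm₂ : 1 ≤ m₂) :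
    (∑' k₂ : ℕ, ∑' k₁ : ℕ,
        q ^ (2 * (k₁ + 1) * (m₁ + m₂) + 2 * (k₂ + 1) * m₂ + (m₁ + m₂) * (m₁ + m₂ + 1)) /
          ((∏ j ∈ Finset.range (m₁ + 1), (1 + q ^ (2 * (k₁ + 1) + 2 * j + 1))) *
            ∏ j ∈ Finset.range (m₂ + 1),
              (1 + q ^ (2 * (k₁ + 1) + 2 * (k₂ + 1) + 2 * m₁ + 2 * j + 1)))) =
      q ^ (2 * (m₁ + m₂)) * q ^ (2 * m₂) * q ^ ((m₁ + m₂) * (m₁ + m₂ + 1)) /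
        ((1 - q ^ (2 * (m₁ + m₂))) * (1 - q ^ (2 * m₂)) *
          ∏ j ∈ Finset.Icc 1 (m₁ + m₂), (1 + q ^ (2 * j + 1))) := by
  have hIcc : ∏ j ∈ Icc 1 (m₁ + m₂), (1 + q ^ (2 * j + 1)) = negQPochhammer q 3 (m₁ + m₂) := by
    rw [negQPochhammer, ← Ico_add_one_right_eq_Icc, prod_Ico_eq_prod_range]
    exact prod_congr (by simp) fun j _ => by ring_nf
  calc _ = ∑' k₂ : ℕ, ∑' k₁ : ℕ, q ^ (2 * (m₁ + m₂) + 2 * m₂ + (m₁ + m₂) * (m₁ + m₂ + 1)) *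
          (q ^ (2 * (m₁ + m₂) * k₁) * q ^ (2 * m₂ * k₂) /
            (negQPochhammer q (3 + 2 * k₁) (m₁ + 1) *
              negQPochhammer q (3 + 2 * k₁ + 2 * m₁ + 2 + 2 * k₂) (m₂ + 1))) := by
        refine tsum_congr fun k₂ => tsum_congr fun k₁ => ?_
        rw [mul_div_assoc', ← pow_add, ← pow_add, negQPochhammer, negQPochhammer]
        congr 2
        · ring
        all_goals exact prod_congr rfl fun j _ => by ring_nf
    _ = _ := by
        simp_rw [tsum_mul_left]
        rw [tsum_tsum_pow_mul_pow_div_negQPochhammer_mul hq (by omega) (by norm_num), hIcc,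
          pow_add, pow_add, mul_one_div]

/-- Lemma 7: for `m₁, m₂ ≥ 1`,
`∑_{k₂=1}^∞ ∑_{k₁=1}^∞ q^{2k₁(m₁+m₂)+2k₂m₂+(m₁+m₂)(m₁+m₂+1)}
    / (∏_{j=0}^{m₁} (1+q^{2k₁+2j+1}) ∏_{j=0}^{m₂} (1+q^{2k₁+2k₂+2m₁+2j+1}))
  = q^{2(m₁+m₂)} q^{2m₂} q^{(m₁+m₂)(m₁+m₂+1)}
    / ((1-q^{2(m₁+m₂)}) (1-q^{2m₂}) ∏_{j=1}^{m₁+m₂} (1+q^{2j+1}))`.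
The sums over `kᵢ ≥ 1` are written as sums over `kᵢ : ℕ` with `kᵢ` replaced by `kᵢ + 1`. -/
theorem lemma7 (q : ℂ) (hq : ‖q‖ < 1) (m₁ m₂ : ℕ) (hm₁ : 1 ≤ m₁) (hm₂ : 1 ≤ m₂) :
    (∑' k₂ : ℕ, ∑' k₁ : ℕ,
        q ^ (2 * (k₁ + 1) * (m₁ + m₂) + 2 * (k₂ + 1) * m₂ + (m₁ + m₂) * (m₁ + m₂ + 1)) /
          ((∏ j ∈ Finset.range (m₁ + 1), (1 + q ^ (2 * (k₁ + 1) + 2 * j + 1))) *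
            ∏ j ∈ Finset.range (m₂ + 1),
              (1 + q ^ (2 * (k₁ + 1) + 2 * (k₂ + 1) + 2 * m₁ + 2 * j + 1)))) =
      q ^ (2 * (m₁ + m₂)) * q ^ (2 * m₂) * q ^ ((m₁ + m₂) * (m₁ + m₂ + 1)) /
        ((1 - q ^ (2 * (m₁ + m₂))) * (1 - q ^ (2 * m₂)) *
          ∏ j ∈ Finset.Icc 1 (m₁ + m₂), (1 + q ^ (2 * j + 1))) :=
  lemma7_general q hq m₁ m₂ hm₂
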